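/- arXiv:1509.06418 — 2 statements merged into one kernel-verified Lean document; each statement's English description precedes it below -/
import Mathlib

section
/- Consider a homogeneous weighted stochastic block model with two communities, each of size n: nodes are partitioned into communities A and B of size n each, and each edge weight W_{ij} is drawn independently from a discrete distribution p_n on the natural numbers if nodes i and j lie in the same community, and from a discrete distribution q_n on the natural numbers otherwise. Let I = -2 log ( Σ_{ℓ ≥ 0} √(p_n(ℓ) q_n(ℓ)) ) denote the Renyi divergence of order 1/2 between p_n and q_n. Then the probability that the maximum likelihood estimator fails to recover the true community partition satisfies P(F) ≤ Σ_{k=1}^{n/2} exp( 2k(log(n/k) + 1) − 2k(n−k) I ). -/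
/-!
STATEMENT 0: In the homogeneous weighted stochastic block model with two communities of
size `n` and discrete edge-weight distributions `p` (within-community) and `q`
(between-community) on ℕ, the probability that maximum likelihood fails to recover the
true partition is at most
`∑_{k=1}^{n/2} exp( 2k(log(n/k) + 1) − 2k(n−k) I )`,
where `I` is the Renyi divergence of order 1/2 between `p` and `q`.
-/

open MeasureTheory Filter
open scoped ENNReal

namespace SBM0

/-- Edges of the complete graph on the `2 n` vertices, as ordered pairs `(i, j)` with `i < j`. -/
abbrev Edge (n : ℕ) := {e : Fin (2 * n) × Fin (2 * n) // e.1 < e.2}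

/-- The ground-truth community assignment: the first `n` vertices form community `A`
(`true`), the remaining `n` vertices form community `B` (`false`). -/
def truth (n : ℕ) (i : Fin (2 * n)) : Bool := decide (i.val < n)

/-- The distribution of the weight of a single edge: `p` for within-community edges,
`q` for between-community edges. -/
noncomputable def edgeMeasure (n : ℕ) (p q : PMF ℕ) (e : Edge n) : Measure ℕ :=
  if truth n e.1.1 = truth n e.1.2 then p.toMeasure else q.toMeasure

/-- The law of the weighted random graph: all edge weights independent. -/
noncomputable def sbm (n : ℕ) (p q : PMF ℕ) : Measure (Edge n → ℕ) :=
  Measure.pi (edgeMeasure n p q)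

/-- Likelihood of the observed weight matrix `w` under the community assignment `σ`. -/
noncomputable def likelihood (n : ℕ) (p q : PMF ℕ) (σ : Fin (2 * n) → Bool)
    (w : Edge n → ℕ) : ℝ≥0∞ :=
  ∏ e : Edge n, if σ e.1.1 = σ e.1.2 then p (w e) else q (w e)

/-- A community assignment is balanced if each community has exactly `n` nodes. -/
def balanced (n : ℕ) (σ : Fin (2 * n) → Bool) : Prop :=
  (Finset.univ.filter fun i => σ i = true).card = n

/-- `σ` coincides with the true partition (as a partition, i.e. up to swapping the
two community labels). -/
def equivTruth (n : ℕ) (σ : Fin (2 * n) → Bool) : Prop :=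
  σ = truth n ∨ σ = fun i => !(truth n i)

/-- Failure event of maximum likelihood: some balanced assignment that is not the true
partition has likelihood at least that of the truth, so that a maximum likelihood
estimate need not coincide with the truth. -/
def failEvent (n : ℕ) (p q : PMF ℕ) : Set (Edge n → ℕ) :=
  {w | ∃ σ, balanced n σ ∧ ¬ equivTruth n σ ∧
    likelihood n p q (truth n) w ≤ likelihood n p q σ w}

/-- The Renyi divergence of order 1/2 between two discrete distributions on ℕ. -/
noncomputable def renyi (p q : PMF ℕ) : ℝ :=
  -2 * Real.log (∑' ℓ : ℕ, Real.sqrt ((p ℓ).toReal * (q ℓ).toReal))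

end SBM0

/-!
By the union bound it suffices to control, for each balanced partition `S` other than the
truth, the probability that `S` is at least as likely as the truth. A Chernoff bound with
exponent `1/2` bounds this probability by the product over the edges of the Bhattacharyya
coefficients of the two hypothesised edge laws; that coefficient is `1` on the edges that both
partitions treat alike and `ρ = exp (-I / 2)` on the `4k(n - k)` edges cut by the `2k` nodes
(`k` in each community) they classify differently. There are at most `(n choose k)²` balanced
partitions with a given `k`, the cases `k` and `n - k` are symmetric, and
`2 (n choose k)² ≤ (e n / k) ^ (2k)`.
-/

open Finset
open scoped Nat symmDiff

lemma ENNReal.tsum_prod_eq_prod_tsum {ι β : Type*} [Fintype ι] (f : ι → β → ℝ≥0∞) :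
    ∑' w : ι → β, ∏ i, f i (w i) = ∏ i, ∑' x, f i x := by
  revert f
  refine Fintype.induction_empty_option
    (P := fun ι _ => ∀ f : ι → β → ℝ≥0∞, ∑' w : ι → β, ∏ i, f i (w i) = ∏ i, ∑' x, f i x)
    ?_ ?_ ?_ ι
  · intro ι ι' _ e ih f
    let := Fintype.ofEquiv ι' e.symm
    rw [← (e.arrowCongr (Equiv.refl β)).tsum_eq, ← e.prod_comp]
    convert ih (fun i => f (e i)) using 2
    funext w
    rw [← e.prod_comp]
    simp
  · intro f; simp
  · intro ι _ ih f
    rw [← (Equiv.piOptionEquivProd (β := fun _ => β)).symm.tsum_eq, ENNReal.tsum_prod']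
    simp [Fintype.prod_option, ENNReal.tsum_mul_left, ENNReal.tsum_mul_right, ih]

-- The Chernoff bound with exponent `1 / 2` for a discrete measure.
lemma MeasureTheory.Measure.measure_setOf_singleton_le_le_tsum {α : Type*} [MeasurableSpace α]
    [Countable α] [MeasurableSingletonClass α] (μ : Measure α) (g : α → ℝ≥0∞) :
    μ {w | μ {w} ≤ g w} ≤ ∑' w, μ {w} ^ (1 / 2 : ℝ) * g w ^ (1 / 2 : ℝ) := by
  rw [← tsum_indicator_apply_singleton μ _ (Set.to_countable _).measurableSet]
  refine ENNReal.tsum_le_tsum fun w => ?_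
  by_cases hw : μ {w} ≤ g w
  · rw [Set.indicator_of_mem (show w ∈ {w | μ {w} ≤ g w} from hw)]
    calc μ {w} = μ {w} ^ (1 / 2 : ℝ) * μ {w} ^ (1 / 2 : ℝ) := by
          rw [← ENNReal.rpow_add_of_nonneg _ _ (by norm_num) (by norm_num)]; norm_num
      _ ≤ _ := by gcongr
  · simp [Set.indicator_of_notMem (show w ∉ {w | μ {w} ≤ g w} from hw)]

namespace PMF

variable {α : Type*} (p q : PMF α)

noncomputable def bhattacharyya : ℝ≥0∞ := ∑' x, p x ^ (1 / 2 : ℝ) * q x ^ (1 / 2 : ℝ)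

lemma bhattacharyya_comm : bhattacharyya p q = bhattacharyya q p := by
  simp only [bhattacharyya, mul_comm]

lemma bhattacharyya_self : bhattacharyya p p = 1 := by
  simp only [bhattacharyya, ← ENNReal.rpow_add_of_nonneg _ _ (by norm_num : (0:ℝ) ≤ 1 / 2)
    (by norm_num : (0:ℝ) ≤ 1 / 2)]
  norm_num

lemma bhattacharyya_le_one : bhattacharyya p q ≤ 1 := by
  have hyoung : ∀ x, p x ^ (1 / 2 : ℝ) * q x ^ (1 / 2 : ℝ) ≤ p x / 2 + q x / 2 := by
    intro x
    have := ENNReal.young_inequality (p x ^ (1 / 2 : ℝ)) (q x ^ (1 / 2 : ℝ))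
      (Real.holderConjugate_iff.2 ⟨by norm_num, by norm_num⟩ : (2:ℝ).HolderConjugate 2)
    rwa [← ENNReal.rpow_mul, ← ENNReal.rpow_mul, one_div_mul_cancel two_ne_zero,
      ENNReal.rpow_one, ENNReal.rpow_one, ENNReal.ofReal_ofNat] at this
  calc bhattacharyya p q ≤ ∑' x, (p x / 2 + q x / 2) := ENNReal.tsum_le_tsum hyoung
    _ = 1 := by
      simp only [div_eq_mul_inv, ENNReal.tsum_add, ENNReal.tsum_mul_right, tsum_coe]
      rw [← two_mul, one_mul, ENNReal.mul_inv_cancel (by norm_num) (by norm_num)]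

lemma toReal_bhattacharyya :
    (bhattacharyya p q).toReal = ∑' x, √((p x).toReal * (q x).toReal) := by
  rw [bhattacharyya, ENNReal.tsum_toReal_eq fun x => ENNReal.mul_ne_top
    (ENNReal.rpow_ne_top_of_nonneg (by norm_num) (p.apply_ne_top x))
    (ENNReal.rpow_ne_top_of_nonneg (by norm_num) (q.apply_ne_top x))]
  congr 1; funext x
  rw [ENNReal.toReal_mul, ← ENNReal.toReal_rpow, ← ENNReal.toReal_rpow, Real.sqrt_eq_rpow,
    Real.mul_rpow ENNReal.toReal_nonneg ENNReal.toReal_nonneg]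

end PMF

namespace Finset

variable {α : Type*} [DecidableEq α] {A S : Finset α}

lemma card_symmDiff_of_card_eq (h : #S = #A) : #(A ∆ S) = 2 * #(A \ S) := by
  rw [symmDiff_def, sup_eq_union, card_union_of_disjoint disjoint_sdiff_sdiff,
    card_sdiff_comm h.symm, two_mul]

lemma card_sdiff_pos_of_card_eq (h : #S = #A) (hne : S ≠ A) : 0 < #(A \ S) := by
  rw [card_pos, nonempty_iff_ne_empty, Ne, sdiff_eq_empty_iff_subset]
  exact fun hAS => hne (eq_of_subset_of_card_le hAS h.le).symm

lemma card_sdiff_lt_of_card_eq [Fintype α] (h : #S = #A) (hA : #Aᶜ = #A) (hne : S ≠ Aᶜ) :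
    #(A \ S) < #A := by
  refine (card_le_card sdiff_subset).lt_of_ne fun hcard => hne ?_
  have hAS : A \ S = A := eq_of_subset_of_card_le sdiff_subset hcard.ge
  have hdisj : S ⊆ Aᶜ := fun i hiS => mem_compl.2 fun hiA => by
    rw [← hAS] at hiA
    exact (mem_sdiff.1 hiA).2 hiS
  exact eq_of_subset_of_card_le hdisj (hA.trans h.symm).le

lemma card_filter_card_sdiff_le [Fintype α] (A : Finset α) (k : ℕ) :
    #{S : Finset α | #S = #A ∧ #(A \ S) = k} ≤ (#A).choose k * (#Aᶜ).choose k := by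
  rw [← card_powersetCard, ← card_powersetCard, ← card_product]
  refine card_le_card_of_injOn (fun S => (A \ S, S \ A)) (fun S hS => ?_) fun S _ T _ hST => ?_
  · simp only [coe_filter, mem_univ, true_and] at hS
    simp only [mem_coe, mem_product, mem_powersetCard]
    refine ⟨⟨sdiff_subset, hS.2⟩, fun i hi => mem_compl.2 (mem_sdiff.1 hi).2, ?_⟩
    rw [card_sdiff_comm hS.1, hS.2]
  · simp only [Prod.mk.injEq] at hST
    ext i
    have h1 := congrArg (i ∈ ·) hST.1
    have h2 := congrArg (i ∈ ·) hST.2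
    simp only [mem_sdiff, eq_iff_iff] at h1 h2
    tauto

lemma sum_filter_card_sdiff_le [Fintype α] (A : Finset α) (hA : #Aᶜ = #A) (f : ℕ → ℝ≥0∞) :
    ∑ S : Finset α with #S = #A ∧ S ≠ A ∧ S ≠ Aᶜ, f #(A \ S) ≤
      ∑ k ∈ Icc 1 (#A - 1), ((#A).choose k : ℝ≥0∞) ^ 2 * f k := by
  have hmaps : ∀ S ∈ ({S | #S = #A ∧ S ≠ A ∧ S ≠ Aᶜ} : Finset (Finset α)),
      #(A \ S) ∈ Icc 1 (#A - 1) := by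
    intro S hS
    simp only [mem_filter, mem_univ, true_and] at hS
    have := card_sdiff_pos_of_card_eq hS.1 hS.2.1
    have := card_sdiff_lt_of_card_eq hS.1 hA hS.2.2
    rw [mem_Icc]; omega
  rw [← sum_fiberwise_of_maps_to' hmaps]
  gcongr with k
  rw [sum_const, nsmul_eq_mul, sq]
  gcongr
  have hfiber := card_filter_card_sdiff_le A k
  rw [hA] at hfiber
  exact_mod_cast (card_le_card fun S hS => by simp_all).trans hfiber

lemma sum_Icc_le_two_mul_sum_Icc_half (n : ℕ) (f : ℕ → ℝ≥0∞) (hf : ∀ k ≤ n, f (n - k) = f k) :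
    ∑ k ∈ Icc 1 (n - 1), f k ≤ 2 * ∑ k ∈ Icc 1 (n / 2), f k := by
  have hcover : Icc 1 (n - 1) ⊆ Icc 1 (n / 2) ∪ (Icc 1 (n / 2)).image (n - ·) := by
    intro k hk
    simp only [mem_Icc, mem_union, mem_image] at hk ⊢
    by_cases hkn : k ≤ n / 2
    · exact Or.inl ⟨hk.1, hkn⟩
    · exact Or.inr ⟨n - k, by omega, by omega⟩
  calc ∑ k ∈ Icc 1 (n - 1), f k
      ≤ ∑ k ∈ Icc 1 (n / 2) ∪ (Icc 1 (n / 2)).image (n - ·), f k := sum_le_sum_of_subset hcover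
    _ ≤ ∑ k ∈ Icc 1 (n / 2), f k + ∑ k ∈ (Icc 1 (n / 2)).image (n - ·), f k := by
      rw [← sum_union_inter]; exact le_self_add
    _ ≤ ∑ k ∈ Icc 1 (n / 2), f k + ∑ k ∈ Icc 1 (n / 2), f (n - k) := by
      gcongr; exact sum_image_le_of_nonneg fun _ _ => zero_le
    _ = 2 * ∑ k ∈ Icc 1 (n / 2), f k := by
      rw [two_mul]; congr 1
      exact sum_congr rfl fun k hk => hf k (by simp at hk; omega)

end Finset

lemma card_separated_increasing_pairs {α : Type*} [Fintype α] [LinearOrder α] (D : Finset α) :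
    #{e : {p : α × α // p.1 < p.2} | ¬(e.1.1 ∈ D ↔ e.1.2 ∈ D)} = #D * (Fintype.card α - #D) := by
  rw [← card_compl, ← card_product, eq_comm]
  refine card_bij (fun x hx => ⟨(min x.1 x.2, max x.1 x.2), min_lt_max.2 ?_⟩) ?_ ?_ ?_
  · rw [mem_product, mem_compl] at hx
    exact fun h => hx.2 (h ▸ hx.1)
  · intro x hx
    rw [mem_product, mem_compl] at hx
    rcases le_total x.1 x.2 with h | h <;> simp [h, hx.1, hx.2]
  · intro x hx y hy hxy
    simp only [mem_product, mem_compl, Subtype.mk.injEq, Prod.mk.injEq] at hx hy hxy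
    rcases le_total x.1 x.2 with h | h <;> rcases le_total y.1 y.2 with h' | h' <;>
      simp_all [Prod.ext_iff]
  · intro e he
    simp only [mem_filter, mem_univ, true_and] at he
    by_cases h : e.1.1 ∈ D
    · exact ⟨e.1, by simp_all, by simp [e.2.le]⟩
    · exact ⟨e.1.swap, by simp_all, by simp [e.2.le]⟩

namespace Real

lemma pow_div_factorial_add_pow_succ_div_factorial_le_exp {x : ℝ} (hx : 0 ≤ x) (m : ℕ) :
    x ^ m / m ! + x ^ (m + 1) / (m + 1)! ≤ exp x := by
  calc x ^ m / m ! + x ^ (m + 1) / (m + 1)!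
      ≤ ∑ i ∈ range m, x ^ i / i ! + x ^ m / m ! + x ^ (m + 1) / (m + 1)! := by
        gcongr; exact le_add_of_nonneg_left (sum_nonneg fun i _ => by positivity)
    _ ≤ exp x := by
        rw [← sum_range_succ, ← sum_range_succ]; exact sum_le_exp_of_nonneg hx _

lemma two_mul_choose_sq_le_exp {n k : ℕ} (hk : 1 ≤ k) (hkn : k ≤ n) :
    2 * (n.choose k : ℝ) ^ 2 ≤ exp (2 * k * (log (n / k) + 1)) := by
  have hk0 : (0 : ℝ) < k := by exact_mod_cast hk
  have hn0 : (0 : ℝ) < n := by exact_mod_cast hk.trans hkn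
  -- the last two terms of the series of `exp k` are both `k ^ k / k !`
  have hfact : 2 * (k : ℝ) ^ k / k ! ≤ exp k := by
    obtain ⟨m, rfl⟩ := Nat.exists_eq_add_of_le' hk
    convert pow_div_factorial_add_pow_succ_div_factorial_le_exp hk0.le m using 1
    rw [Nat.factorial_succ]; push_cast; field_simp; ring
  have hchoose : (n.choose k : ℝ) ≤ (exp 1 * n / k) ^ k / 2 := by
    calc (n.choose k : ℝ) ≤ n ^ k / k ! := Nat.choose_le_pow_div k n
      _ ≤ (exp 1 * n / k) ^ k / 2 := by
        rw [div_le_div_iff₀ (by positivity) two_pos, div_pow, mul_pow, ← exp_nat_mul, mul_one]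
        have h2 : 2 ≤ exp k * k ! / (k : ℝ) ^ k := by
          rw [le_div_iff₀ (by positivity)]
          exact (div_le_iff₀ (by positivity)).1 hfact
        calc (n : ℝ) ^ k * 2 ≤ n ^ k * (exp k * k ! / (k : ℝ) ^ k) := by gcongr
          _ = _ := by ring
  calc 2 * (n.choose k : ℝ) ^ 2 ≤ 2 * ((exp 1 * n / k) ^ k / 2) ^ 2 := by gcongr
    _ ≤ ((exp 1 * n / k) ^ k) ^ 2 := by
      nlinarith [pow_nonneg (by positivity : (0:ℝ) ≤ (exp 1 * n / k) ^ k) 2]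
    _ = exp (2 * k * (log (n / k) + 1)) := by
      rw [← pow_mul, mul_div_assoc, mul_pow, ← exp_nat_mul, ← rpow_natCast (n / k : ℝ),
        rpow_def_of_pos (by positivity), ← exp_add]
      congr 1; push_cast; ring

-- At `r = 0` the right side is `exp 0` because `log 0 = 0`, hence the need for `m ≠ 0`.
lemma pow_le_exp_mul_log {r : ℝ} (hr : 0 ≤ r) {m : ℕ} (hm : m ≠ 0) :
    r ^ m ≤ exp (m * log r) := by
  rcases hr.eq_or_lt with rfl | hr
  · rw [zero_pow hm]; exact (exp_pos _).le
  · rw [exp_nat_mul, exp_log hr]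

end Real

namespace SBM0

variable {n : ℕ} (p q : PMF ℕ)

lemma renyi_eq : renyi p q = -2 * Real.log (p.bhattacharyya q).toReal := by
  rw [renyi, PMF.toReal_bhattacharyya]

noncomputable def edgePMF (σ : Fin (2 * n) → Bool) (e : Edge n) : PMF ℕ :=
  if σ e.1.1 = σ e.1.2 then p else q

lemma likelihood_eq_prod (σ : Fin (2 * n) → Bool) (w : Edge n → ℕ) :
    likelihood n p q σ w = ∏ e, edgePMF p q σ e (w e) :=
  prod_congr rfl fun e _ => (apply_ite (fun r : PMF ℕ => r (w e)) _ _ _).symm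

lemma sbm_eq_pi : sbm n p q = Measure.pi fun e => (edgePMF p q (truth n) e).toMeasure :=
  congrArg Measure.pi (funext fun _ => (apply_ite PMF.toMeasure _ _ _).symm)

lemma sbm_singleton (w : Edge n → ℕ) : sbm n p q {w} = likelihood n p q (truth n) w := by
  rw [likelihood_eq_prod, sbm_eq_pi, ← Set.univ_pi_singleton, Measure.pi_pi]
  exact prod_congr rfl fun e _ => PMF.toMeasure_apply_singleton _ _ (measurableSet_singleton _)

lemma bhattacharyya_edgePMF (σ τ : Fin (2 * n) → Bool) (e : Edge n) :
    (edgePMF p q σ e).bhattacharyya (edgePMF p q τ e) =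
      if (σ e.1.1 = σ e.1.2 ↔ τ e.1.1 = τ e.1.2) then 1 else p.bhattacharyya q := by
  unfold edgePMF
  by_cases hσ : σ e.1.1 = σ e.1.2 <;> by_cases hτ : τ e.1.1 = τ e.1.2 <;>
    simp [hσ, hτ, PMF.bhattacharyya_self, PMF.bhattacharyya_comm q p]

lemma sbm_setOf_likelihood_le_le_pow (σ : Fin (2 * n) → Bool) :
    sbm n p q {w | likelihood n p q (truth n) w ≤ likelihood n p q σ w} ≤
      p.bhattacharyya q ^ #{e : Edge n | ¬(truth n e.1.1 = truth n e.1.2 ↔ σ e.1.1 = σ e.1.2)} := by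
  calc sbm n p q {w | likelihood n p q (truth n) w ≤ likelihood n p q σ w}
      = sbm n p q {w | sbm n p q {w} ≤ likelihood n p q σ w} := by simp_rw [sbm_singleton]
    _ ≤ ∑' w, sbm n p q {w} ^ (1 / 2 : ℝ) * likelihood n p q σ w ^ (1 / 2 : ℝ) :=
      Measure.measure_setOf_singleton_le_le_tsum _ _
    _ = ∑' w : Edge n → ℕ, ∏ e, edgePMF p q (truth n) e (w e) ^ (1 / 2 : ℝ) *
          edgePMF p q σ e (w e) ^ (1 / 2 : ℝ) := by
      simp_rw [sbm_singleton, likelihood_eq_prod,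
        ← ENNReal.prod_rpow_of_nonneg (by norm_num : (0:ℝ) ≤ 1 / 2), prod_mul_distrib]
    _ = ∏ e, (edgePMF p q (truth n) e).bhattacharyya (edgePMF p q σ e) :=
      ENNReal.tsum_prod_eq_prod_tsum fun e x =>
        edgePMF p q (truth n) e x ^ (1 / 2 : ℝ) * edgePMF p q σ e x ^ (1 / 2 : ℝ)
    _ = _ := by
      simp_rw [bhattacharyya_edgePMF]
      rw [prod_ite, prod_const_one, prod_const, one_mul]

def trueCommunity (n : ℕ) : Finset (Fin (2 * n)) := {i | (i : ℕ) < n}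

lemma card_trueCommunity : #(trueCommunity n) = n := by
  rw [trueCommunity, Fin.card_filter_val_lt]; omega

lemma card_compl_trueCommunity : #(trueCommunity n)ᶜ = n := by
  rw [card_compl, Fintype.card_fin, card_trueCommunity]; omega

lemma truth_eq_decide_mem (i : Fin (2 * n)) : truth n i = decide (i ∈ trueCommunity n) := by
  simp [truth, trueCommunity]

lemma card_discordant_edges {S : Finset (Fin (2 * n))} (hS : #S = n) :
    #{e : Edge n | ¬(truth n e.1.1 = truth n e.1.2 ↔ decide (e.1.1 ∈ S) = decide (e.1.2 ∈ S))} =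
      4 * #(trueCommunity n \ S) * (n - #(trueCommunity n \ S)) := by
  have hcut : ∀ e : Edge n,
      ¬(truth n e.1.1 = truth n e.1.2 ↔ decide (e.1.1 ∈ S) = decide (e.1.2 ∈ S)) ↔
        ¬(e.1.1 ∈ trueCommunity n ∆ S ↔ e.1.2 ∈ trueCommunity n ∆ S) := by
    intro e
    simp only [truth_eq_decide_mem, decide_eq_decide, mem_symmDiff]
    tauto
  rw [filter_congr fun e _ => hcut e, card_separated_increasing_pairs,
    card_symmDiff_of_card_eq (hS.trans card_trueCommunity.symm), Fintype.card_fin]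
  have := card_le_card (sdiff_subset (s := trueCommunity n) (t := S))
  rw [card_trueCommunity] at this
  rw [show 2 * n - 2 * #(trueCommunity n \ S) = 2 * (n - #(trueCommunity n \ S)) by omega]
  ring

lemma failEvent_subset : failEvent n p q ⊆
    ⋃ S ∈ ({S | #S = n ∧ S ≠ trueCommunity n ∧ S ≠ (trueCommunity n)ᶜ} : Finset _),
      {w | likelihood n p q (truth n) w ≤ likelihood n p q (fun i => decide (i ∈ S)) w} := by
  rintro w ⟨σ, hbal, hne, hw⟩
  have hσ : σ = fun i => decide (i ∈ ({i | σ i = true} : Finset _)) := by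
    funext i; simp
  refine Set.mem_iUnion₂.2 ⟨({i | σ i = true} : Finset _), ?_, hσ ▸ hw⟩
  simp only [mem_filter, mem_univ, true_and]
  refine ⟨hbal, fun h => hne (Or.inl ?_), fun h => hne (Or.inr ?_)⟩
  · funext i; rw [hσ, h, truth_eq_decide_mem]
  · funext i; rw [hσ, h, truth_eq_decide_mem]; simp

lemma sbm_failEvent_le : sbm n p q (failEvent n p q) ≤
    ∑ k ∈ Icc 1 (n - 1), (n.choose k : ℝ≥0∞) ^ 2 * p.bhattacharyya q ^ (4 * k * (n - k)) := by
  have hcount := sum_filter_card_sdiff_le (trueCommunity n)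
    (card_compl_trueCommunity.trans card_trueCommunity.symm)
    fun k => p.bhattacharyya q ^ (4 * k * (n - k))
  rw [card_trueCommunity] at hcount
  refine ((measure_mono (failEvent_subset p q)).trans (measure_biUnion_finset_le _ _)).trans
    (le_trans ?_ hcount)
  gcongr with S hS
  rw [← card_discordant_edges (mem_filter.1 hS).2.1]
  exact sbm_setOf_likelihood_le_le_pow p q _

lemma two_mul_choose_sq_mul_bhattacharyya_pow_le {k : ℕ} (hk : 1 ≤ k) (h2k : 2 * k ≤ n) :
    2 * ((n.choose k : ℝ≥0∞) ^ 2 * p.bhattacharyya q ^ (4 * k * (n - k))) ≤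
      ENNReal.ofReal (Real.exp (2 * (k : ℝ) * (Real.log ((n : ℝ) / (k : ℝ)) + 1)
        - 2 * (k : ℝ) * ((n : ℝ) - (k : ℝ)) * renyi p q)) := by
  set r := (p.bhattacharyya q).toReal
  have hρ : p.bhattacharyya q = ENNReal.ofReal r :=
    (ENNReal.ofReal_toReal (ne_top_of_le_ne_top ENNReal.one_ne_top (p.bhattacharyya_le_one q))).symm
  have hexp : 2 * (k : ℝ) * ((n : ℝ) - (k : ℝ)) * renyi p q =
      -(((4 * k * (n - k) : ℕ) : ℝ) * Real.log r) := by
    rw [renyi_eq]; push_cast [show k ≤ n by omega]; ring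
  rw [hρ, ← ENNReal.ofReal_pow ENNReal.toReal_nonneg, ← ENNReal.ofReal_natCast,
    ← ENNReal.ofReal_pow (Nat.cast_nonneg _), ← ENNReal.ofReal_mul (by positivity),
    ← ENNReal.ofReal_ofNat, ← ENNReal.ofReal_mul (by norm_num)]
  refine ENNReal.ofReal_le_ofReal ?_
  rw [sub_eq_add_neg, Real.exp_add, hexp, neg_neg, ← mul_assoc]
  have hm : 4 * k * (n - k) ≠ 0 := mul_ne_zero (mul_ne_zero four_ne_zero (by omega)) (by omega)
  exact mul_le_mul (Real.two_mul_choose_sq_le_exp hk (by omega))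
    (Real.pow_le_exp_mul_log ENNReal.toReal_nonneg hm) (by positivity) (by positivity)

theorem statement0 (n : ℕ) (p q : PMF ℕ) :
    (sbm n p q (failEvent n p q)).toReal ≤
      ∑ k ∈ Finset.Icc 1 (n / 2),
        Real.exp (2 * (k : ℝ) * (Real.log ((n : ℝ) / (k : ℝ)) + 1)
          - 2 * (k : ℝ) * ((n : ℝ) - (k : ℝ)) * renyi p q) := by
  set G : ℕ → ℝ≥0∞ := fun k => (n.choose k : ℝ≥0∞) ^ 2 * p.bhattacharyya q ^ (4 * k * (n - k))
  have hG : ∀ k ≤ n, G (n - k) = G k := fun k hk => by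
    simp only [G, Nat.choose_symm hk, Nat.sub_sub_self hk]; ring_nf
  have hbound : sbm n p q (failEvent n p q) ≤ ∑ k ∈ Icc 1 (n / 2),
      ENNReal.ofReal (Real.exp (2 * (k : ℝ) * (Real.log ((n : ℝ) / (k : ℝ)) + 1)
        - 2 * (k : ℝ) * ((n : ℝ) - (k : ℝ)) * renyi p q)) :=
    calc sbm n p q (failEvent n p q) ≤ ∑ k ∈ Icc 1 (n - 1), G k := sbm_failEvent_le p q
      _ ≤ 2 * ∑ k ∈ Icc 1 (n / 2), G k := sum_Icc_le_two_mul_sum_Icc_half n G hG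
      _ ≤ _ := by
        rw [mul_sum]
        gcongr with k hk
        rw [mem_Icc] at hk
        exact two_mul_choose_sq_mul_bhattacharyya_pow_le p q hk.1 (by omega)
  rw [← ENNReal.ofReal_sum_of_nonneg fun _ _ => (Real.exp_pos _).le] at hbound
  exact ENNReal.toReal_le_of_le_ofReal (sum_nonneg fun _ _ => (Real.exp_pos _).le) hbound

end SBM0
end

section
/- Consider the discrete weighted stochastic block model with K ≥ 2 communities of size n and color alphabet {0, 1, ..., L}: for fixed vectors a = (a_1, ..., a_L) and b = (b_1, ..., b_L) in ℝ_+^L with u = Σ_ℓ a_ℓ and v = Σ_ℓ b_ℓ, within-community edge weights have distribution p_n with p_n(0) = 1 − u log n / n and p_n(ℓ) = a_ℓ log n / n for 1 ≤ ℓ ≤ L, and between-community edge weights have distribution q_n with q_n(0) = 1 − v log n / n and q_n(ℓ) = b_ℓ log n / n. If Σ_{ℓ=1}^L (√a_ℓ − √b_ℓ)² > 1, then the maximum likelihood estimator recovers the communities exactly with probability converging to 1 as n → ∞. -/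
open MeasureTheory Filter
open scoped ENNReal

namespace SBM5

/-- Mass function of the edge-color distribution with parameter vector `c`:
color `0` has mass `1 − (∑ c) log n / n`, color `ℓ+1` has mass `c ℓ log n / n`. -/
noncomputable def colMass (L : ℕ) (c : Fin L → ℝ) (n : ℕ) : Fin (L + 1) → ℝ≥0∞ :=
  Fin.cases (ENNReal.ofReal (1 - (∑ j, c j) * Real.log n / n))
    (fun j => ENNReal.ofReal (c j * Real.log n / n))

/-- The corresponding distribution on the color alphabet `{0, 1, …, L}`. -/
noncomputable def colDist (L : ℕ) (c : Fin L → ℝ) (n : ℕ) : Measure (Fin (L + 1)) :=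
  ∑ ℓ : Fin (L + 1), colMass L c n ℓ • Measure.dirac ℓ

/-- Edges of the complete graph on the `n * K` vertices. -/
abbrev Edge (n K : ℕ) := {e : Fin (n * K) × Fin (n * K) // e.1 < e.2}

/-- The ground-truth community assignment. -/
def truth (n K : ℕ) (i : Fin (n * K)) : Fin K :=
  ⟨i.val / n, Nat.div_lt_of_lt_mul i.isLt⟩

/-- Distribution of the color of one edge: parameters `a` within a community,
parameters `b` between communities. -/
noncomputable def edgeMeasure (n K L : ℕ) (a b : Fin L → ℝ) (e : Edge n K) :
    Measure (Fin (L + 1)) :=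
  if truth n K e.1.1 = truth n K e.1.2 then colDist L a n else colDist L b n

/-- The law of the colored random graph: all edge colors independent. -/
noncomputable def sbm (n K L : ℕ) (a b : Fin L → ℝ) : Measure (Edge n K → Fin (L + 1)) :=
  Measure.pi (edgeMeasure n K L a b)

/-- Likelihood of the observed colors `w` under the assignment `σ`. -/
noncomputable def likelihood (n K L : ℕ) (a b : Fin L → ℝ) (σ : Fin (n * K) → Fin K)
    (w : Edge n K → Fin (L + 1)) : ℝ≥0∞ :=
  ∏ e : Edge n K, if σ e.1.1 = σ e.1.2 then colMass L a n (w e) else colMass L b n (w e)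

/-- An assignment is balanced if each of the `K` communities has exactly `n` nodes. -/
def balanced (n K : ℕ) (σ : Fin (n * K) → Fin K) : Prop :=
  ∀ c : Fin K, (Finset.univ.filter fun i => σ i = c).card = n

/-- `σ` coincides with the truth up to a permutation of the `K` community labels. -/
def equivTruth (n K : ℕ) (σ : Fin (n * K) → Fin K) : Prop :=
  ∃ π : Equiv.Perm (Fin K), σ = π ∘ truth n K

/-- Success event of maximum likelihood: the truth is strictly more likely than every
balanced assignment that is not a label permutation of the truth. -/
def successEvent (n K L : ℕ) (a b : Fin L → ℝ) : Set (Edge n K → Fin (L + 1)) :=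
  {w | ∀ σ, balanced n K σ → ¬ equivTruth n K σ →
    likelihood n K L a b σ w < likelihood n K L a b (truth n K) w}

/-!
Union bound over the balanced assignments `σ` that are not relabellings of the truth. For a
fixed `σ`, the Chernoff–Bhattacharyya bound shows that `σ` is at least as likely as the truth
with probability at most `ρ ^ d`, where `d` counts the edges on which `σ` and the truth disagree
about lying within one community and `ρ = ∑ₓ √(p x * q x) ≤ 1 - D log n / (2n)`, with
`D = ∑ ℓ, (√aℓ - √bℓ)²`. If `m` is the Hamming distance from `σ` to the nearest relabelling of
the truth, the confusion matrix of `σ` (row and column sums `n`) gives `d ≥ 2 m (n - m)` and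
`d ≥ n min m n`. Assignments with `m ≤ (D - 1) n / (2 D)` therefore fail with probability at most
`n ^ (-(D + 1) m / 2)`, and there are roughly `(nK) ^ m` of them at distance `m`, so they
contribute `o(1)` because `D > 1`; each of the at most `K ^ (nK)` others fails with
probability at most `n ^ (-(D - 1) n / 4)`.
-/

open Finset

theorem card_filter_not_iff_add_two_mul {α : Type*} (s : Finset α) (P Q : α → Prop)
    [DecidablePred P] [DecidablePred Q] :
    #{x ∈ s | ¬(P x ↔ Q x)} + 2 * #{x ∈ s | P x ∧ Q x} = #{x ∈ s | P x} + #{x ∈ s | Q x} := by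
  simp only [card_filter, mul_sum, ← sum_add_distrib]
  refine sum_congr rfl fun x _ => ?_
  by_cases hP : P x <;> by_cases hQ : Q x <;> simp [hP, hQ]

theorem sum_card_fiber_sq {V β : Type*} [Fintype V] [Fintype β] [DecidableEq β] (f : V → β) :
    ∑ b, #{i | f i = b} ^ 2 = #{p : V × V | f p.1 = f p.2} := by
  rw [card_eq_sum_card_fiberwise (f := fun p : V × V => f p.1) (t := univ) (by simp)]
  refine sum_congr rfl fun b _ => ?_
  rw [sq, ← card_product]
  congr 1
  ext ⟨i, j⟩
  simp only [mem_product, mem_filter, mem_univ, true_and]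
  constructor
  · rintro ⟨hi, hj⟩; exact ⟨hi.trans hj.symm, hi⟩
  · rintro ⟨hij, hi⟩; exact ⟨hi, hij.symm.trans hi⟩

theorem card_filter_prod_eq_two_mul {V : Type*} [Fintype V] [LinearOrder V]
    (R : V → V → Prop) [DecidableRel R] (hsymm : ∀ i j, R i j → R j i) (hirrefl : ∀ i, ¬R i i) :
    #{p : V × V | R p.1 p.2} = 2 * #{e : {p : V × V // p.1 < p.2} | R e.1.1 e.1.2} := by
  have hedges : #{e : {p : V × V // p.1 < p.2} | R e.1.1 e.1.2}
      = #{p : V × V | R p.1 p.2 ∧ p.1 < p.2} := by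
    refine card_bij (fun e _ => e.1) (fun e he => by simpa [e.2] using he)
      (fun _ _ _ _ => Subtype.ext) fun p hp => ?_
    simp only [mem_filter, mem_univ, true_and] at hp
    exact ⟨⟨p, hp.2⟩, by simpa using hp.1, rfl⟩
  have hswap : #{p : V × V | R p.1 p.2 ∧ p.2 < p.1} = #{p : V × V | R p.1 p.2 ∧ p.1 < p.2} := by
    refine card_nbij' Prod.swap Prod.swap ?_ ?_ (fun p _ => p.swap_swap) (fun p _ => p.swap_swap)
    all_goals
      intro p hp
      simp only [coe_filter, mem_univ, true_and, Set.mem_ofPred_eq] at hp ⊢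
      exact ⟨hsymm _ _ hp.1, hp.2⟩
  rw [← card_filter_add_card_filter_not (s := {p : V × V | R p.1 p.2}) (p := fun p => p.1 < p.2),
    filter_filter, filter_filter, hedges, two_mul]
  congr 1
  rw [← hswap]
  congr 1
  ext p
  simp only [mem_filter, mem_univ, true_and, not_lt]
  constructor
  · rintro ⟨h, hle⟩
    exact ⟨h, hle.lt_of_ne fun heq => hirrefl p.1 (heq ▸ h)⟩
  · rintro ⟨h, hlt⟩; exact ⟨h, hlt.le⟩

section Matrix

variable {ι : Type*} [Fintype ι] [DecidableEq ι] {M : ι → ι → ℝ} {n : ℝ}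

theorem sum_sq_le_of_sum_row_eq (hM : ∀ i j, 0 ≤ M i j) (hrow : ∀ i, ∑ j, M i j = n) {h : ℝ}
    (hh : ∑ i, M i i + h = Fintype.card ι * n) :
    ∑ i, ∑ j, M i j ^ 2 ≤ Fintype.card ι * n ^ 2 - 2 * n * h + 2 * h ^ 2 := by
  set r : ι → ℝ := fun i => ∑ j ∈ univ.erase i, M i j
  have hdiag (i : ι) : M i i = n - r i := by
    rw [← hrow i, ← add_sum_erase _ _ (mem_univ i)]; ring
  have hr_sum : ∑ i, r i = h := by
    have : ∑ i, M i i = ∑ i, (n - r i) := sum_congr rfl fun i _ => hdiag i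
    rw [this, sum_sub_distrib, sum_const, card_univ, nsmul_eq_mul] at hh
    linarith
  have hrow_sq (i : ι) : ∑ j, M i j ^ 2 ≤ (n - r i) ^ 2 + r i ^ 2 := by
    rw [← add_sum_erase _ _ (mem_univ i), hdiag i]
    gcongr
    exact sum_sq_le_sq_sum_of_nonneg fun j _ => hM i j
  have hr_sq : ∑ i, r i ^ 2 ≤ h ^ 2 :=
    hr_sum ▸ sum_sq_le_sq_sum_of_nonneg fun i _ => sum_nonneg fun j _ => hM i j
  calc ∑ i, ∑ j, M i j ^ 2 ≤ ∑ i, ((n - r i) ^ 2 + r i ^ 2) := sum_le_sum fun i _ => hrow_sq i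
    _ = ∑ i, (n ^ 2 - 2 * n * r i + 2 * r i ^ 2) := sum_congr rfl fun i _ => by ring
    _ = Fintype.card ι * n ^ 2 - 2 * n * ∑ i, r i + 2 * ∑ i, r i ^ 2 := by
      rw [sum_add_distrib, sum_sub_distrib, ← mul_sum, ← mul_sum, sum_const, card_univ,
        nsmul_eq_mul]
    _ ≤ _ := by rw [hr_sum]; linarith

theorem exists_perm_sum_sq_le [Nonempty ι] (hM : ∀ i j, 0 ≤ M i j) (hrow : ∀ i, ∑ j, M i j = n)
    (hcol : ∀ j, ∑ i, M i j = n) :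
    ∃ π : Equiv.Perm ι,
      ∑ i, ∑ j, M i j ^ 2 ≤ n * max (∑ i, M i (π i)) ((Fintype.card ι - 1) * n) := by
  obtain ⟨i₀⟩ := ‹Nonempty ι›
  have hn : 0 ≤ n := hrow i₀ ▸ sum_nonneg fun j _ => hM i₀ j
  have hle_n (i j : ι) : M i j ≤ n := hrow i ▸ single_le_sum (fun j _ => hM i j) (mem_univ j)
  choose m hm using fun i => exists_max_image univ (M i) ⟨i, mem_univ i⟩
  have hsq : ∑ i, ∑ j, M i j ^ 2 ≤ n * ∑ i, M i (m i) := by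
    rw [mul_sum]
    refine sum_le_sum fun i _ => ?_
    calc ∑ j, M i j ^ 2 ≤ ∑ j, M i j * M i (m i) :=
          sum_le_sum fun j _ => by
            rw [sq]; exact mul_le_mul_of_nonneg_left ((hm i).2 j (mem_univ j)) (hM i j)
      _ = n * M i (m i) := by rw [← sum_mul, hrow i, mul_comm]
  by_cases hinj : Function.Injective m
  · exact ⟨Equiv.ofBijective m hinj.bijective_of_finite, hsq.trans
      (mul_le_mul_of_nonneg_left (le_max_left _ _) hn)⟩
  -- two rows share their maximizing column, whose sum is `n`, so the maxima lose `n` in total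
  obtain ⟨i₁, i₂, hm₁₂, hne⟩ := Function.not_injective_iff.mp hinj
  have hdefect : n ≤ ∑ i, (n - M i (m i)) :=
    calc n ≤ (n - M i₁ (m i₂)) + (n - M i₂ (m i₂)) := by
          have := sum_le_sum_of_subset_of_nonneg (subset_univ {i₁, i₂})
            fun i _ _ => hM i (m i₂)
          rw [sum_pair hne, hcol] at this
          linarith
      _ = ∑ i ∈ {i₁, i₂}, (n - M i (m i)) := by rw [sum_pair hne, hm₁₂]
      _ ≤ ∑ i, (n - M i (m i)) :=
          sum_le_sum_of_subset_of_nonneg (subset_univ _) fun i _ _ => sub_nonneg.2 (hle_n _ _)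
  refine ⟨1, hsq.trans (mul_le_mul_of_nonneg_left (le_max_of_le_right ?_) hn)⟩
  rw [sum_sub_distrib, sum_const, card_univ, nsmul_eq_mul] at hdefect
  linarith

end Matrix

theorem sum_pow_card_ne {V κ : Type*} [Fintype V] [DecidableEq V] [Fintype κ] [DecidableEq κ]
    (f₀ : V → κ) (y : ℝ) :
    ∑ σ : V → κ, y ^ #{i | σ i ≠ f₀ i} = (1 + (Fintype.card κ - 1) * y) ^ Fintype.card V := by
  have hterm (σ : V → κ) : y ^ #{i | σ i ≠ f₀ i} = ∏ i, if σ i = f₀ i then 1 else y := by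
    rw [prod_ite, prod_const_one, prod_const, one_mul]
  have hfactor (i : V) : ∑ k, (if k = f₀ i then 1 else y) = 1 + (Fintype.card κ - 1) * y := by
    rw [← add_sum_erase _ _ (mem_univ (f₀ i)), if_pos rfl,
      sum_congr rfl fun k hk => if_neg (ne_of_mem_erase hk), sum_const,
      card_erase_of_mem (mem_univ _), card_univ, nsmul_eq_mul,
      Nat.cast_pred (Fintype.card_pos_iff.2 ⟨f₀ i⟩)]
  simp_rw [hterm]
  rw [← Fintype.prod_sum (fun i k => if k = f₀ i then (1 : ℝ) else y)]
  simp only [hfactor, prod_const, card_univ]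

theorem sum_prod_le_prod_sum_sqrt_mul {ι α : Type*} [Fintype ι] [DecidableEq ι] [Fintype α]
    {p q : ι → α → ℝ} (hp : ∀ i x, 0 ≤ p i x) (hq : ∀ i x, 0 ≤ q i x) :
    ∑ w : ι → α with ∏ i, p i (w i) ≤ ∏ i, q i (w i), ∏ i, p i (w i)
      ≤ ∏ i, ∑ x, √(p i x * q i x) := by
  have hP (w : ι → α) : 0 ≤ ∏ i, p i (w i) := prod_nonneg fun i _ => hp i _
  calc ∑ w : ι → α with ∏ i, p i (w i) ≤ ∏ i, q i (w i), ∏ i, p i (w i)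
      ≤ ∑ w : ι → α with ∏ i, p i (w i) ≤ ∏ i, q i (w i), ∏ i, √(p i (w i) * q i (w i)) := by
        refine sum_le_sum fun w hw => ?_
        rw [← Real.sqrt_prod _ fun i _ => mul_nonneg (hp i _) (hq i _), prod_mul_distrib]
        exact Real.le_sqrt_of_sq_le (by
          rw [sq]; exact mul_le_mul_of_nonneg_left (mem_filter.1 hw).2 (hP w))
    _ ≤ ∑ w : ι → α, ∏ i, √(p i (w i) * q i (w i)) :=
        sum_le_sum_of_subset_of_nonneg (filter_subset _ _)
          fun w _ _ => prod_nonneg fun i _ => Real.sqrt_nonneg _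
    _ = ∏ i, ∑ x, √(p i x * q i x) := (Fintype.prod_sum fun i x => √(p i x * q i x)).symm

theorem tendsto_toReal_measure_of_compl_le {Ω : ℕ → Type*} [∀ n, MeasurableSpace (Ω n)]
    {μ : ∀ n, Measure (Ω n)} {s : ∀ n, Set (Ω n)} (hs : ∀ n, MeasurableSet (s n))
    {ε : ℕ → ℝ≥0∞} (hε : Tendsto ε atTop (nhds 0))
    (h : ∀ᶠ n in atTop, IsProbabilityMeasure (μ n) ∧ μ n (s n)ᶜ ≤ ε n) :
    Tendsto (fun n => (μ n (s n)).toReal) atTop (nhds 1) := by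
  have hcompl : Tendsto (fun n => μ n (s n)ᶜ) atTop (nhds 0) :=
    tendsto_of_tendsto_of_tendsto_of_le_of_le' tendsto_const_nhds hε
      (Eventually.of_forall fun _ => zero_le) (h.mono fun _ h => h.2)
  have hmeas : Tendsto (fun n => μ n (s n)) atTop (nhds 1) := by
    have := ENNReal.Tendsto.sub tendsto_const_nhds hcompl (Or.inl ENNReal.one_ne_top)
    rw [tsub_zero] at this
    refine this.congr' ?_
    filter_upwards [h] with n ⟨_, _⟩
    rw [prob_compl_eq_one_sub (hs n), ENNReal.sub_sub_cancel ENNReal.one_ne_top prob_le_one]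
  simpa [Function.comp_def] using (ENNReal.tendsto_toReal ENNReal.one_ne_top).comp hmeas

theorem card_truth_fiber (n K : ℕ) (c : Fin K) : #{i | truth n K i = c} = n := by
  rcases Nat.eq_zero_or_pos n with rfl | hn
  · exact card_eq_zero.2 (filter_eq_empty_iff.2 fun i _ => absurd i.isLt (by simp))
  have hmem (x : ℕ) : x / n = c ↔ x ∈ Ico (c * n) (c * n + n) := by
    rw [Nat.div_eq_iff hn, mem_Ico]; omega
  calc #{i | truth n K i = c} = #(Ico (c * n) (c * n + n)) := by
        refine card_bij (fun i _ => i.val) (fun i hi => ?_) (fun _ _ _ _ => Fin.ext) fun x hx => ?_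
        · exact (hmem i).1 (congrArg Fin.val (mem_filter.1 hi).2)
        · have hx' : x < n * K := by
            have := (mem_Ico.1 hx).2
            nlinarith [c.isLt]
          exact ⟨⟨x, hx'⟩, mem_filter.2 ⟨mem_univ _, Fin.ext ((hmem x).2 hx)⟩, rfl⟩
    _ = n := by simp

def confusion (n K : ℕ) (σ : Fin (n * K) → Fin K) (c c' : Fin K) : ℕ :=
  #{i | truth n K i = c ∧ σ i = c'}

def disagreements (n K : ℕ) (σ : Fin (n * K) → Fin K) : ℕ :=
  #{e : Edge n K | ¬(truth n K e.1.1 = truth n K e.1.2 ↔ σ e.1.1 = σ e.1.2)}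

noncomputable def labelDist (n K : ℕ) (σ : Fin (n * K) → Fin K) : ℕ :=
  univ.inf' univ_nonempty fun π : Equiv.Perm (Fin K) => #{i | σ i ≠ π (truth n K i)}

section Confusion

variable {n K : ℕ} (σ : Fin (n * K) → Fin K)

theorem sum_confusion_row (c : Fin K) : ∑ c', confusion n K σ c c' = n := by
  refine Eq.trans ?_ (card_truth_fiber n K c)
  rw [card_eq_sum_card_fiberwise (f := σ) (t := univ) (by simp)]
  simp only [confusion, filter_filter]

theorem sum_confusion_col {σ} (hσ : balanced n K σ) (c' : Fin K) :
    ∑ c, confusion n K σ c c' = n := by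
  refine Eq.trans ?_ (hσ c')
  rw [card_eq_sum_card_fiberwise (f := truth n K) (t := univ) (by simp)]
  simp only [confusion, filter_filter, and_comm]

theorem sum_confusion_perm (π : Equiv.Perm (Fin K)) :
    ∑ c, confusion n K σ c (π c) = #{i | σ i = π (truth n K i)} := by
  rw [card_eq_sum_card_fiberwise (f := truth n K) (t := univ) (by simp)]
  simp only [confusion, filter_filter]
  refine sum_congr rfl fun c _ => congrArg card (filter_congr fun i _ => ?_)
  exact ⟨fun ⟨h1, h2⟩ => ⟨h1 ▸ h2, h1⟩, fun ⟨h1, h2⟩ => ⟨h2, h2 ▸ h1⟩⟩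

theorem sum_sum_confusion_sq :
    ∑ c, ∑ c', confusion n K σ c c' ^ 2
      = #{p : Fin (n * K) × Fin (n * K) |
          truth n K p.1 = truth n K p.2 ∧ σ p.1 = σ p.2} := by
  have := sum_card_fiber_sq (fun i => (truth n K i, σ i))
  simp only [Prod.ext_iff, Fintype.sum_prod_type] at this
  exact this

theorem disagreements_add_sum_sum_confusion_sq {σ} (hσ : balanced n K σ) :
    disagreements n K σ + ∑ c, ∑ c', confusion n K σ c c' ^ 2 = K * n ^ 2 := by
  have hpairs := card_filter_prod_eq_two_mul
    (fun i j => ¬(truth n K i = truth n K j ↔ σ i = σ j)) (fun i j h => by simpa [eq_comm] using h)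
    (fun i h => h (iff_of_true rfl rfl))
  have hxor := card_filter_not_iff_add_two_mul univ (fun p : Fin (n * K) × Fin (n * K) =>
    truth n K p.1 = truth n K p.2) (fun p => σ p.1 = σ p.2)
  have htruth := sum_card_fiber_sq (truth n K)
  have hσ' := sum_card_fiber_sq σ
  simp only [card_truth_fiber, sum_const, card_univ, Fintype.card_fin, smul_eq_mul] at htruth
  simp only [show ∀ c, #{i | σ i = c} = n from hσ, sum_const, card_univ, Fintype.card_fin,
    smul_eq_mul] at hσ'
  rw [sum_sum_confusion_sq]
  unfold disagreements
  grind

theorem labelDist_le (π : Equiv.Perm (Fin K)) :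
    labelDist n K σ ≤ #{i | σ i ≠ π (truth n K i)} :=
  inf'_le _ (mem_univ π)

theorem exists_labelDist_eq :
    ∃ π : Equiv.Perm (Fin K), #{i | σ i ≠ π (truth n K i)} = labelDist n K σ := by
  obtain ⟨π, -, hπ⟩ := exists_mem_eq_inf' univ_nonempty
    fun π : Equiv.Perm (Fin K) => #{i | σ i ≠ π (truth n K i)}
  exact ⟨π, hπ.symm⟩

theorem sum_confusion_perm_add_card_ne (π : Equiv.Perm (Fin K)) :
    ∑ c, confusion n K σ c (π c) + #{i | σ i ≠ π (truth n K i)} = n * K := by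
  rw [sum_confusion_perm, card_filter_add_card_filter_not, card_univ, Fintype.card_fin]

theorem two_mul_labelDist_mul_le {σ} (hσ : balanced n K σ) :
    2 * (labelDist n K σ : ℝ) * (n - labelDist n K σ) ≤ disagreements n K σ := by
  obtain ⟨π, hπ⟩ := exists_labelDist_eq σ
  have hbound := sum_sq_le_of_sum_row_eq (M := fun c c' => (confusion n K σ c (π c') : ℝ))
    (n := n) (h := labelDist n K σ) (fun _ _ => Nat.cast_nonneg _)
    (fun c => by
      rw [Equiv.sum_comp π fun c' => (confusion n K σ c c' : ℝ)]
      exact_mod_cast sum_confusion_row σ c)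
    (by
      rw [Fintype.card_fin, ← hπ]
      exact_mod_cast (sum_confusion_perm_add_card_ne σ π).trans (mul_comm n K))
  have hid : (disagreements n K σ : ℝ) + ∑ c, ∑ c', (confusion n K σ c c' : ℝ) ^ 2 = K * n ^ 2 := by
    exact_mod_cast disagreements_add_sum_sum_confusion_sq hσ
  have hperm : ∑ c, ∑ c', (confusion n K σ c (π c') : ℝ) ^ 2
      = ∑ c, ∑ c', (confusion n K σ c c' : ℝ) ^ 2 :=
    sum_congr rfl fun c _ => Equiv.sum_comp π fun c' => (confusion n K σ c c' : ℝ) ^ 2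
  rw [hperm, Fintype.card_fin] at hbound
  linarith

theorem mul_min_labelDist_le (hK : 0 < K) {σ} (hσ : balanced n K σ) :
    (n : ℝ) * min (labelDist n K σ : ℝ) n ≤ disagreements n K σ := by
  have : Nonempty (Fin K) := Fin.pos_iff_nonempty.mp hK
  obtain ⟨π, hπ⟩ := exists_perm_sum_sq_le (M := fun c c' => (confusion n K σ c c' : ℝ)) (n := n)
    (fun _ _ => Nat.cast_nonneg _) (fun c => by exact_mod_cast sum_confusion_row σ c)
    (fun c' => by exact_mod_cast sum_confusion_col hσ c')
  have hdiag : ∑ c, (confusion n K σ c (π c) : ℝ) + labelDist n K σ ≤ n * K := by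
    have hsum : ∑ c, (confusion n K σ c (π c) : ℝ) + #{i | σ i ≠ π (truth n K i)} = n * K := by
      exact_mod_cast sum_confusion_perm_add_card_ne σ π
    have hle : (labelDist n K σ : ℝ) ≤ #{i | σ i ≠ π (truth n K i)} := by
      exact_mod_cast labelDist_le σ π
    linarith
  have hmax : max (∑ c, (confusion n K σ c (π c) : ℝ)) ((Fintype.card (Fin K) - 1) * n)
      ≤ n * K - min (labelDist n K σ : ℝ) n := by
    rw [Fintype.card_fin]
    have := min_le_left (labelDist n K σ : ℝ) n
    have := min_le_right (labelDist n K σ : ℝ) n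
    exact max_le (by linarith) (by linarith)
  have hid : (disagreements n K σ : ℝ) + ∑ c, ∑ c', (confusion n K σ c c' : ℝ) ^ 2 = K * n ^ 2 := by
    exact_mod_cast disagreements_add_sum_sum_confusion_sq hσ
  nlinarith [mul_le_mul_of_nonneg_left hmax n.cast_nonneg]

end Confusion

theorem sum_pow_labelDist_le {n K : ℕ} {S : Finset (Fin (n * K) → Fin K)}
    (hS : ∀ σ ∈ S, ¬equivTruth n K σ) {y : ℝ} (hy : 0 ≤ y) :
    ∑ σ ∈ S, y ^ labelDist n K σ ≤ K.factorial * ((1 + (K - 1) * y) ^ (n * K) - 1) := by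
  have hfix (π : Equiv.Perm (Fin K)) :
      ∑ σ ∈ S, y ^ #{i | σ i ≠ π (truth n K i)} ≤ (1 + (K - 1) * y) ^ (n * K) - 1 := by
    have hsub : S ⊆ univ.erase (π ∘ truth n K) := fun σ hσ =>
      mem_erase.2 ⟨fun h => hS σ hσ ⟨π, h⟩, mem_univ σ⟩
    have hall := sum_pow_card_ne (π ∘ truth n K) y
    simp only [Function.comp_apply, Fintype.card_fin] at hall
    calc ∑ σ ∈ S, y ^ #{i | σ i ≠ π (truth n K i)}
        ≤ ∑ σ ∈ univ.erase (π ∘ truth n K), y ^ #{i | σ i ≠ π (truth n K i)} :=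
          sum_le_sum_of_subset_of_nonneg hsub fun _ _ _ => pow_nonneg hy _
      _ = (1 + (K - 1) * y) ^ (n * K) - 1 := by
          rw [sum_erase_eq_sub (mem_univ _), hall]
          simp
  calc ∑ σ ∈ S, y ^ labelDist n K σ
      ≤ ∑ σ ∈ S, ∑ π : Equiv.Perm (Fin K), y ^ #{i | σ i ≠ π (truth n K i)} := by
        refine sum_le_sum fun σ _ => ?_
        obtain ⟨π, hπ⟩ := exists_labelDist_eq σ
        rw [← hπ]
        exact single_le_sum (f := fun π : Equiv.Perm (Fin K) => y ^ #{i | σ i ≠ π (truth n K i)})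
          (fun π _ => pow_nonneg hy _) (mem_univ π)
    _ = ∑ π : Equiv.Perm (Fin K), ∑ σ ∈ S, y ^ #{i | σ i ≠ π (truth n K i)} := sum_comm
    _ ≤ ∑ _π : Equiv.Perm (Fin K), ((1 + (K - 1) * y) ^ (n * K) - 1) :=
        sum_le_sum fun π _ => hfix π
    _ = K.factorial * ((1 + (K - 1) * y) ^ (n * K) - 1) := by
        rw [sum_const, card_univ, Fintype.card_perm, Fintype.card_fin, nsmul_eq_mul]

/-- The real masses behind `colMass`; `ENNReal.ofReal` clips them at `0`, so they are the true
masses only once `(∑ c) log n / n ≤ 1`. -/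
noncomputable def realMass (L : ℕ) (c : Fin L → ℝ) (n : ℕ) : Fin (L + 1) → ℝ :=
  Fin.cases (1 - (∑ j, c j) * Real.log n / n) fun j => c j * Real.log n / n

section RealMass

variable {L : ℕ} {c : Fin L → ℝ} {n : ℕ}

theorem colMass_eq_ofReal (x : Fin (L + 1)) :
    colMass L c n x = ENNReal.ofReal (realMass L c n x) := by
  cases x using Fin.cases <;> rfl

theorem sum_realMass : ∑ x, realMass L c n x = 1 := by
  simp only [Fin.sum_univ_succ, realMass, Fin.cases_zero, Fin.cases_succ, ← sum_div, ← sum_mul]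
  ring

theorem eventually_realMass_nonneg (hc : ∀ ℓ, 0 ≤ c ℓ) :
    ∀ᶠ n : ℕ in atTop, ∀ x, 0 ≤ realMass L c n x := by
  have hsmall : Tendsto (fun n : ℕ => (∑ j, c j) * (Real.log n / n)) atTop (nhds 0) := by
    simpa using ((Real.isLittleO_log_id_atTop.tendsto_div_nhds_zero.comp
      tendsto_natCast_atTop_atTop).const_mul (∑ j, c j) :)
  filter_upwards [hsmall.eventually_le_const one_pos] with n hn x
  cases x using Fin.cases with
  | zero => simp only [realMass, Fin.cases_zero]; rw [mul_div_assoc]; linarith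
  | succ j => simp only [realMass, Fin.cases_succ]; have := hc j; positivity

theorem sum_sqrt_realMass_mul_le {a b : Fin L → ℝ} (ha : ∀ ℓ, 0 ≤ a ℓ) (hb : ∀ ℓ, 0 ≤ b ℓ)
    (ha₀ : 0 ≤ realMass L a n 0) (hb₀ : 0 ≤ realMass L b n 0) :
    ∑ x, √(realMass L a n x * realMass L b n x)
      ≤ 1 - (∑ ℓ, (√(a ℓ) - √(b ℓ)) ^ 2) / 2 * (Real.log n / n) := by
  set t := Real.log n / n
  have ht : 0 ≤ t := div_nonneg (Real.log_natCast_nonneg n) n.cast_nonneg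
  have hzero : √(realMass L a n 0 * realMass L b n 0)
      ≤ (realMass L a n 0 + realMass L b n 0) / 2 := by
    rw [Real.sqrt_mul ha₀]
    nlinarith [sq_nonneg (√(realMass L a n 0) - √(realMass L b n 0)), Real.sq_sqrt ha₀,
      Real.sq_sqrt hb₀]
  have hsucc (j : Fin L) :
      √(realMass L a n j.succ * realMass L b n j.succ) = √(a j) * √(b j) * t := by
    simp only [realMass, Fin.cases_succ, mul_div_assoc]
    rw [show a j * t * (b j * t) = a j * b j * t ^ 2 by ring,
      Real.sqrt_mul (mul_nonneg (ha j) (hb j)), Real.sqrt_sq ht, Real.sqrt_mul (ha j)]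
  have hsq (ℓ : Fin L) : (√(a ℓ) - √(b ℓ)) ^ 2 = a ℓ + b ℓ - 2 * (√(a ℓ) * √(b ℓ)) := by
    rw [sub_sq, Real.sq_sqrt (ha ℓ), Real.sq_sqrt (hb ℓ)]; ring
  rw [Fin.sum_univ_succ]
  simp only [hsucc, hsq, ← sum_mul, sum_sub_distrib, sum_add_distrib, ← mul_sum]
  simp only [realMass, Fin.cases_zero, mul_div_assoc] at hzero ⊢
  linarith

end RealMass

instance (L : ℕ) (c : Fin L → ℝ) (n : ℕ) : IsFiniteMeasure (colDist L c n) :=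
  ⟨by simp [colDist, colMass_eq_ofReal, ENNReal.sum_lt_top]⟩

theorem colDist_singleton (L : ℕ) (c : Fin L → ℝ) (n : ℕ) (x : Fin (L + 1)) :
    colDist L c n {x} = colMass L c n x := by
  simp [colDist, Pi.single_apply]

theorem colDist_univ {L : ℕ} {c : Fin L → ℝ} {n : ℕ} (hc : ∀ x, 0 ≤ realMass L c n x) :
    colDist L c n Set.univ = 1 := by
  simp only [colDist, Measure.coe_finsetSum, Finset.sum_apply, Measure.smul_apply, measure_univ,
    smul_eq_mul, mul_one, colMass_eq_ofReal]
  rw [← ENNReal.ofReal_sum_of_nonneg fun x _ => hc x, sum_realMass, ENNReal.ofReal_one]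

noncomputable def edgeRealMass (n K L : ℕ) (a b : Fin L → ℝ) (σ : Fin (n * K) → Fin K)
    (e : Edge n K) : Fin (L + 1) → ℝ :=
  if σ e.1.1 = σ e.1.2 then realMass L a n else realMass L b n

instance (n K L : ℕ) (a b : Fin L → ℝ) (e : Edge n K) :
    IsFiniteMeasure (edgeMeasure n K L a b e) := by
  unfold edgeMeasure; split <;> infer_instance

section Sbm

variable {n K L : ℕ} {a b : Fin L → ℝ}

theorem sbm_singleton (w : Edge n K → Fin (L + 1)) :
    sbm n K L a b {w} = likelihood n K L a b (truth n K) w := by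
  rw [sbm, Measure.pi_singleton]
  refine prod_congr rfl fun e _ => ?_
  unfold edgeMeasure
  split_ifs <;> exact colDist_singleton ..

theorem edgeRealMass_nonneg (ha : ∀ x, 0 ≤ realMass L a n x)
    (hb : ∀ x, 0 ≤ realMass L b n x) (σ : Fin (n * K) → Fin K) (e : Edge n K) (x : Fin (L + 1)) :
    0 ≤ edgeRealMass n K L a b σ e x := by
  unfold edgeRealMass; split_ifs <;> apply_assumption

theorem likelihood_eq_ofReal (ha : ∀ x, 0 ≤ realMass L a n x)
    (hb : ∀ x, 0 ≤ realMass L b n x) (σ : Fin (n * K) → Fin K) (w : Edge n K → Fin (L + 1)) :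
    likelihood n K L a b σ w = ENNReal.ofReal (∏ e, edgeRealMass n K L a b σ e (w e)) := by
  rw [ENNReal.ofReal_prod_of_nonneg fun e _ => edgeRealMass_nonneg ha hb σ e _]
  refine prod_congr rfl fun e _ => ?_
  unfold edgeRealMass
  split_ifs <;> exact colMass_eq_ofReal _

theorem isProbabilityMeasure_sbm (ha : ∀ x, 0 ≤ realMass L a n x)
    (hb : ∀ x, 0 ≤ realMass L b n x) : IsProbabilityMeasure (sbm n K L a b) :=
  ⟨by
    rw [sbm, Measure.pi_univ]
    refine prod_eq_one fun e _ => ?_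
    unfold edgeMeasure
    split_ifs
    exacts [colDist_univ ha, colDist_univ hb]⟩

theorem sbm_likelihood_truth_le_le_pow (ha : ∀ x, 0 ≤ realMass L a n x)
    (hb : ∀ x, 0 ≤ realMass L b n x) (σ : Fin (n * K) → Fin K) :
    sbm n K L a b {w | likelihood n K L a b (truth n K) w ≤ likelihood n K L a b σ w}
      ≤ ENNReal.ofReal
          ((∑ x, √(realMass L a n x * realMass L b n x)) ^ disagreements n K σ) := by
  set p := edgeRealMass n K L a b (truth n K)
  set q := edgeRealMass n K L a b σ
  have hp := edgeRealMass_nonneg ha hb (truth n K)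
  have hq := edgeRealMass_nonneg ha hb σ
  set T := ({w | ∏ e, p e (w e) ≤ ∏ e, q e (w e)} : Finset (Edge n K → Fin (L + 1)))
  have hsub : {w | likelihood n K L a b (truth n K) w ≤ likelihood n K L a b σ w} ⊆ ↑T := by
    intro w hw
    rw [Set.mem_ofPred_eq, likelihood_eq_ofReal ha hb, likelihood_eq_ofReal ha hb,
      ENNReal.ofReal_le_ofReal_iff (prod_nonneg fun e _ => hq e _)] at hw
    simpa [T] using hw
  have hself (c : Fin L → ℝ) (hc : ∀ x, 0 ≤ realMass L c n x) :
      ∑ x, √(realMass L c n x * realMass L c n x) = 1 := by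
    simp only [Real.sqrt_mul_self (hc _), sum_realMass]
  have hfactor (e : Edge n K) : ∑ x, √(p e x * q e x) =
      if (truth n K e.1.1 = truth n K e.1.2 ↔ σ e.1.1 = σ e.1.2) then 1
      else ∑ x, √(realMass L a n x * realMass L b n x) := by
    by_cases h₁ : truth n K e.1.1 = truth n K e.1.2 <;> by_cases h₂ : σ e.1.1 = σ e.1.2 <;>
      simp only [p, q, edgeRealMass, h₁, h₂, if_true, if_false, iff_true, iff_false, not_true,
        hself a ha, hself b hb, mul_comm (realMass L b n _)]
  calc sbm n K L a b {w | likelihood n K L a b (truth n K) w ≤ likelihood n K L a b σ w}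
      ≤ sbm n K L a b ↑T := measure_mono hsub
    _ = ∑ w ∈ T, ENNReal.ofReal (∏ e, p e (w e)) := by
        rw [← sum_measure_singleton]
        simp only [sbm_singleton, likelihood_eq_ofReal ha hb, p]
    _ = ENNReal.ofReal (∑ w ∈ T, ∏ e, p e (w e)) :=
        (ENNReal.ofReal_sum_of_nonneg fun w _ => prod_nonneg fun e _ => hp e _).symm
    _ ≤ ENNReal.ofReal (∏ e, ∑ x, √(p e x * q e x)) :=
        ENNReal.ofReal_le_ofReal (sum_prod_le_prod_sum_sqrt_mul hp hq)
    _ = _ := by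
        rw [prod_congr rfl fun e _ => hfactor e, prod_ite, prod_const_one, prod_const, one_mul]
        rfl

end Sbm

theorem pow_disagreements_le {n K : ℕ} (hK : 0 < K) (hn : 0 < n) {D : ℝ} (hD : 1 < D)
    {σ : Fin (n * K) → Fin K} (hσ : balanced n K σ) {ρ : ℝ} (hρ₀ : 0 ≤ ρ)
    (hρ : ρ ≤ 1 - D / 2 * (Real.log n / n)) :
    ρ ^ disagreements n K σ
      ≤ ((n : ℝ) ^ (-(D + 1) / 2)) ^ labelDist n K σ + ((n : ℝ) ^ (-(D - 1) / 4)) ^ n := by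
  set m := labelDist n K σ
  set d := disagreements n K σ
  have hn' : (0 : ℝ) < n := by exact_mod_cast hn
  have hlog : 0 ≤ Real.log n := Real.log_natCast_nonneg n
  have hD₀ : 0 < D := by linarith
  have hm₀ : (0 : ℝ) ≤ m := m.cast_nonneg
  have hexp (s : ℝ) (k : ℕ) : ((n : ℝ) ^ s) ^ k = Real.exp (s * Real.log n * k) := by
    rw [Real.rpow_def_of_pos hn', ← Real.exp_nat_mul]; ring_nf
  have hρd : ρ ^ d ≤ Real.exp (-(D / 2 * (Real.log n / n) * d)) := by
    calc ρ ^ d ≤ Real.exp (-(D / 2 * (Real.log n / n))) ^ d :=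
          pow_le_pow_left₀ hρ₀ (hρ.trans (by linarith [Real.add_one_le_exp (-(D / 2 *
            (Real.log n / n)))])) d
      _ = _ := by rw [← Real.exp_nat_mul]; ring_nf
  refine hρd.trans ?_
  rw [hexp, hexp]
  set δ := (D - 1) / (2 * D)
  have hc : 0 ≤ D / 2 * (Real.log n / n) := by positivity
  by_cases hsmall : (m : ℝ) ≤ δ * n
  · have hd : (D + 1) / D * (m * n) ≤ d :=
      calc (D + 1) / D * (m * n) = 2 * m * (n - δ * n) := by simp only [δ]; field_simp; ring
        _ ≤ 2 * m * (n - m) := by gcongr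
        _ ≤ d := two_mul_labelDist_mul_le hσ
    refine le_add_of_le_of_nonneg (Real.exp_le_exp.2 ?_) (Real.exp_nonneg _)
    calc -(D / 2 * (Real.log n / n) * d) ≤ -(D / 2 * (Real.log n / n) * ((D + 1) / D * (m * n))) :=
          neg_le_neg (mul_le_mul_of_nonneg_left hd hc)
      _ = -(D + 1) / 2 * Real.log n * m := by field_simp
  · have hδ : δ ≤ 1 := by rw [div_le_one (by positivity)]; linarith
    have hd : δ * n * n ≤ d :=
      calc δ * n * n ≤ n * min (m : ℝ) n := by
            rw [mul_comm _ (n : ℝ)]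
            exact mul_le_mul_of_nonneg_left (le_min (by linarith) (by nlinarith)) hn'.le
        _ ≤ d := mul_min_labelDist_le hK hσ
    refine le_add_of_nonneg_of_le (Real.exp_nonneg _) (Real.exp_le_exp.2 ?_)
    calc -(D / 2 * (Real.log n / n) * d) ≤ -(D / 2 * (Real.log n / n) * (δ * n * n)) :=
          neg_le_neg (mul_le_mul_of_nonneg_left hd hc)
      _ = -(D - 1) / 4 * Real.log n * n := by simp only [δ]; field_simp; ring

/-- With `y = n ^ (-(D + 1) / 2)`, the first term bounds `∑ σ, y ^ labelDist n K σ`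
(`sum_pow_labelDist_le`); the second is `K ^ (n K)` assignments times the failure probability
`n ^ (-(D - 1) n / 4)` of those far from every relabelling of the truth. -/
noncomputable def failureBound (K : ℕ) (D : ℝ) (n : ℕ) : ℝ :=
  K.factorial * ((1 + (K - 1) * (n : ℝ) ^ (-(D + 1) / 2)) ^ (n * K) - 1)
    + ((K : ℝ) ^ K * (n : ℝ) ^ (-(D - 1) / 4)) ^ n

theorem sum_pow_disagreements_le_failureBound {n K : ℕ} (hK : 0 < K) (hn : 0 < n) {D : ℝ}
    (hD : 1 < D) {S : Finset (Fin (n * K) → Fin K)}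
    (hS : ∀ σ ∈ S, balanced n K σ ∧ ¬equivTruth n K σ) {ρ : ℝ} (hρ₀ : 0 ≤ ρ)
    (hρ : ρ ≤ 1 - D / 2 * (Real.log n / n)) :
    ∑ σ ∈ S, ρ ^ disagreements n K σ ≤ failureBound K D n := by
  have hy : (0 : ℝ) ≤ (n : ℝ) ^ (-(D + 1) / 2) := by positivity
  have hz : (0 : ℝ) ≤ ((n : ℝ) ^ (-(D - 1) / 4)) ^ n := by positivity
  calc ∑ σ ∈ S, ρ ^ disagreements n K σ
      ≤ ∑ σ ∈ S, (((n : ℝ) ^ (-(D + 1) / 2)) ^ labelDist n K σ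
          + ((n : ℝ) ^ (-(D - 1) / 4)) ^ n) :=
        sum_le_sum fun σ hσ => pow_disagreements_le hK hn hD (hS σ hσ).1 hρ₀ hρ
    _ ≤ K.factorial * ((1 + (K - 1) * (n : ℝ) ^ (-(D + 1) / 2)) ^ (n * K) - 1)
          + (K : ℝ) ^ (n * K) * ((n : ℝ) ^ (-(D - 1) / 4)) ^ n := by
        rw [sum_add_distrib, sum_const, nsmul_eq_mul]
        gcongr
        · exact sum_pow_labelDist_le (fun σ hσ => (hS σ hσ).2) hy
        · exact_mod_cast (card_le_univ S).trans_eq (by simp)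
    _ = failureBound K D n := by rw [failureBound, mul_pow, ← pow_mul, mul_comm K n]

theorem sbm_compl_successEvent_le {n K L : ℕ} (hK : 0 < K) (hn : 0 < n) {a b : Fin L → ℝ}
    (ha : ∀ ℓ, 0 ≤ a ℓ) (hb : ∀ ℓ, 0 ≤ b ℓ) (hsep : 1 < ∑ ℓ, (√(a ℓ) - √(b ℓ)) ^ 2)
    (haₙ : ∀ x, 0 ≤ realMass L a n x) (hbₙ : ∀ x, 0 ≤ realMass L b n x) :
    sbm n K L a b (successEvent n K L a b)ᶜ
      ≤ ENNReal.ofReal (failureBound K (∑ ℓ, (√(a ℓ) - √(b ℓ)) ^ 2) n) := by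
  classical
  set ρ := ∑ x, √(realMass L a n x * realMass L b n x)
  set bad := ({σ | balanced n K σ ∧ ¬equivTruth n K σ} : Finset (Fin (n * K) → Fin K))
  have hρ₀ : 0 ≤ ρ := sum_nonneg fun x _ => Real.sqrt_nonneg _
  have hcover : (successEvent n K L a b)ᶜ ⊆ ⋃ σ ∈ bad,
      {w | likelihood n K L a b (truth n K) w ≤ likelihood n K L a b σ w} := by
    intro w hw
    simp only [successEvent, Set.mem_compl_iff, Set.mem_ofPred_eq, not_forall, not_lt] at hw
    obtain ⟨σ, hσ, hne, hle⟩ := hw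
    exact Set.mem_biUnion (by simp [bad, hσ, hne]) hle
  calc sbm n K L a b (successEvent n K L a b)ᶜ
      ≤ ∑ σ ∈ bad, sbm n K L a b
          {w | likelihood n K L a b (truth n K) w ≤ likelihood n K L a b σ w} :=
        (measure_mono hcover).trans (measure_biUnion_finset_le _ _)
    _ ≤ ∑ σ ∈ bad, ENNReal.ofReal (ρ ^ disagreements n K σ) :=
        sum_le_sum fun σ _ => sbm_likelihood_truth_le_le_pow haₙ hbₙ σ
    _ = ENNReal.ofReal (∑ σ ∈ bad, ρ ^ disagreements n K σ) :=
        (ENNReal.ofReal_sum_of_nonneg fun σ _ => pow_nonneg hρ₀ _).symm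
    _ ≤ _ := ENNReal.ofReal_le_ofReal <|
        sum_pow_disagreements_le_failureBound hK hn hsep (fun σ hσ => (mem_filter.1 hσ).2) hρ₀
          (sum_sqrt_realMass_mul_le ha hb (haₙ 0) (hbₙ 0))

theorem tendsto_one_add_pow_mul {y : ℕ → ℝ} (hy : ∀ n, 0 ≤ y n)
    (h : Tendsto (fun n : ℕ => n * y n) atTop (nhds 0)) (k : ℕ) :
    Tendsto (fun n => (1 + y n) ^ (n * k)) atTop (nhds 1) := by
  have hexp : Tendsto (fun n : ℕ => Real.exp (k * (n * y n))) atTop (nhds 1) := by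
    simpa [Function.comp_def] using (Real.continuous_exp.tendsto _).comp (h.const_mul (k : ℝ))
  refine tendsto_of_tendsto_of_tendsto_of_le_of_le tendsto_const_nhds hexp
    (fun n => one_le_pow₀ (by linarith [hy n])) fun n => ?_
  calc (1 + y n) ^ (n * k) ≤ Real.exp (y n) ^ (n * k) :=
        pow_le_pow_left₀ (by linarith [hy n]) (by linarith [Real.add_one_le_exp (y n)]) _
    _ = Real.exp (k * (n * y n)) := by rw [← Real.exp_nat_mul]; push_cast; ring_nf

theorem tendsto_pow_self_of_tendsto_zero {u : ℕ → ℝ} (hu₀ : ∀ n, 0 ≤ u n)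
    (hu : Tendsto u atTop (nhds 0)) : Tendsto (fun n => u n ^ n) atTop (nhds 0) := by
  refine tendsto_of_tendsto_of_tendsto_of_le_of_le' tendsto_const_nhds
    (tendsto_pow_atTop_nhds_zero_of_lt_one (r := 1 / 2) (by norm_num) (by norm_num))
    (Eventually.of_forall fun n => pow_nonneg (hu₀ n) n) ?_
  filter_upwards [hu.eventually_le_const (by norm_num : (0 : ℝ) < 1 / 2)] with n hn
  exact pow_le_pow_left₀ (hu₀ n) hn n

theorem tendsto_failureBound {K : ℕ} (hK : 0 < K) {D : ℝ} (hD : 1 < D) :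
    Tendsto (failureBound K D) atTop (nhds 0) := by
  have hn := tendsto_natCast_atTop_atTop (R := ℝ)
  have hny : Tendsto (fun n : ℕ => n * ((K - 1) * (n : ℝ) ^ (-(D + 1) / 2))) atTop (nhds 0) := by
    have := ((tendsto_rpow_neg_atTop (y := (D - 1) / 2) (by linarith)).comp hn).const_mul
      ((K : ℝ) - 1)
    rw [mul_zero] at this
    refine this.congr' ?_
    filter_upwards [eventually_gt_atTop 0] with n hn
    rw [Function.comp_apply, show -((D - 1) / 2) = 1 + -(D + 1) / 2 by ring,
      Real.rpow_add (by exact_mod_cast hn), Real.rpow_one]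
    ring
  have hbase : Tendsto (fun n : ℕ => (K : ℝ) ^ K * (n : ℝ) ^ (-(D - 1) / 4)) atTop (nhds 0) := by
    have := ((tendsto_rpow_neg_atTop (y := (D - 1) / 4) (by linarith)).comp hn).const_mul
      ((K : ℝ) ^ K)
    simp only [Function.comp_def, neg_div, mul_zero] at this ⊢
    exact this
  have hK₁ : (1 : ℝ) ≤ K := by exact_mod_cast hK
  have := ((tendsto_one_add_pow_mul (fun n => mul_nonneg (by linarith)
    (Real.rpow_nonneg n.cast_nonneg _)) hny K).sub_const 1).const_mul (K.factorial : ℝ)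
  have := this.add (tendsto_pow_self_of_tendsto_zero (fun n => by positivity) hbase)
  rwa [sub_self, mul_zero, zero_add] at this

theorem statement5_general (K L : ℕ) (hK : 2 ≤ K) (a b : Fin L → ℝ)
    (ha : ∀ ℓ, 0 ≤ a ℓ) (hb : ∀ ℓ, 0 ≤ b ℓ)
    (hsep : 1 < ∑ ℓ, (Real.sqrt (a ℓ) - Real.sqrt (b ℓ)) ^ 2) :
    Filter.Tendsto (fun n => (sbm n K L a b (successEvent n K L a b)).toReal)
      Filter.atTop (nhds 1) := by
  have hK₀ : 0 < K := by omega
  have hbound := ENNReal.tendsto_ofReal (tendsto_failureBound hK₀ hsep)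
  rw [ENNReal.ofReal_zero] at hbound
  refine tendsto_toReal_measure_of_compl_le (fun n => .of_discrete) hbound ?_
  filter_upwards [eventually_realMass_nonneg ha, eventually_realMass_nonneg hb,
    eventually_gt_atTop 0] with n haₙ hbₙ hn
  exact ⟨isProbabilityMeasure_sbm haₙ hbₙ,
    sbm_compl_successEvent_le hK₀ hn ha hb hsep haₙ hbₙ⟩

theorem statement5 (K L : ℕ) (hK : 2 ≤ K) (hL : 1 ≤ L) (a b : Fin L → ℝ)
    (ha : ∀ ℓ, 0 ≤ a ℓ) (hb : ∀ ℓ, 0 ≤ b ℓ)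
    (hsep : 1 < ∑ ℓ, (Real.sqrt (a ℓ) - Real.sqrt (b ℓ)) ^ 2) :
    Filter.Tendsto (fun n => (sbm n K L a b (successEvent n K L a b)).toReal)
      Filter.atTop (nhds 1) :=
  statement5_general K L hK a b ha hb hsep

end SBM5
end
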